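/- Let 𝔘 be a Banach algebra whose unitization 𝔘♯ is symmetrically pseudo-amenable with a symmetric approximate diagonal {t_λ}, and let X be a Banach 𝔘-bimodule such that for each x ∈ X the net {ψ_x(t_λ)} is bounded and for each bounded Jordan derivation D : 𝔘 → X the net {Φ_D(t_λ)} is bounded. Then every bounded Jordan derivation from 𝔘 to X is a derivation. -/

import Mathlib

/-!
Extend `D` by `D(1) = 0` to a Jordan derivation of `𝔘♯` into the unital `𝔘♯`-bimodule `X`; the
Jordan identity makes its defect `δ(a, b) = D(ab) − D(a)·b − a·D(b)` antisymmetric. Put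
`x_λ = Φ_D(t_λ)`. Lifting the Jordan identities in two and three variables to `𝔘♯ ⊗̂ 𝔘♯` and
evaluating them on the symmetric approximate diagonal, where `ψ_x(t_λ)` asymptotically commutes
with `𝔘♯`, one finds first that every `δ(a, b)` is central and then that
`a·x_λ − x_λ·a → D(a)`. Thus `D` is a pointwise limit of inner derivations, hence a derivation.
-/

open Filter Topology

universe u

/-- A realization of the projective Banach-space tensor square `A ⊗̂ A` of a (non-unital)
Banach algebra `A`, together with the canonical bimodule operations `a•t`, `t•a`, the
"opposite" operations `a∘t`, `t∘a`, the product maps `π`, `π°` and the flip map, each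
characterized by its values on elementary tensors.  The norm is the projective tensor norm:
`‖a ⊗ b‖ ≤ ‖a‖‖b‖` and every element is an absolutely convergent sum of elementary tensors
whose total norm is arbitrarily close to its norm; moreover bounded bilinear maps lift. -/
structure ProjTensorSquare (A : Type u) [NonUnitalNormedRing A] [NormedSpace ℂ A]
    [IsScalarTower ℂ A A] [SMulCommClass ℂ A A] [CompleteSpace A] where
  /-- the underlying Banach space of `A ⊗̂ A` -/
  T : Type u
  [nacg : NormedAddCommGroup T]
  [nsp : NormedSpace ℂ T]
  [cplt : CompleteSpace T]
  /-- the canonical bilinear map `(a, b) ↦ a ⊗ b` -/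
  tmul : A →L[ℂ] A →L[ℂ] T
  norm_tmul_le : ∀ a b : A, ‖tmul a b‖ ≤ ‖a‖ * ‖b‖
  /-- the projective norm property -/
  exists_rep : ∀ (t : T) (ε : ℝ), 0 < ε → ∃ u v : ℕ → A,
      Summable (fun n => ‖u n‖ * ‖v n‖) ∧ HasSum (fun n => tmul (u n) (v n)) t ∧
      ∑' n, ‖u n‖ * ‖v n‖ ≤ ‖t‖ + ε
  /-- the universal property: bounded bilinear maps into a Banach space lift to `T` -/
  lift : ∀ {X : Type u} [NormedAddCommGroup X] [NormedSpace ℂ X] [CompleteSpace X]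
      (f : A →L[ℂ] A →L[ℂ] X), ∃ g : T →L[ℂ] X, (∀ a b, g (tmul a b) = f a b) ∧ ‖g‖ ≤ ‖f‖
  /-- the left module action: `a • (b ⊗ c) = (a * b) ⊗ c` -/
  lmul : A → T →L[ℂ] T
  lmul_tmul : ∀ a b c, lmul a (tmul b c) = tmul (a * b) c
  /-- the right module action: `(b ⊗ c) • a = b ⊗ (c * a)` -/
  rmul : A → T →L[ℂ] T
  rmul_tmul : ∀ a b c, rmul a (tmul b c) = tmul b (c * a)
  /-- the left opposite action: `a ∘ (b ⊗ c) = b ⊗ (a * c)` -/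
  lcirc : A → T →L[ℂ] T
  lcirc_tmul : ∀ a b c, lcirc a (tmul b c) = tmul b (a * c)
  /-- the right opposite action: `(b ⊗ c) ∘ a = (b * a) ⊗ c` -/
  rcirc : A → T →L[ℂ] T
  rcirc_tmul : ∀ a b c, rcirc a (tmul b c) = tmul (b * a) c
  /-- the product map `π : b ⊗ c ↦ b * c` -/
  π : T →L[ℂ] A
  π_tmul : ∀ b c, π (tmul b c) = b * c
  /-- the opposite product map `π° : b ⊗ c ↦ c * b` -/
  πop : T →L[ℂ] A
  πop_tmul : ∀ b c, πop (tmul b c) = c * b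
  /-- the flip map `(b ⊗ c)° = c ⊗ b` -/
  flip : T →L[ℂ] T
  flip_tmul : ∀ b c, flip (tmul b c) = tmul c b

attribute [instance] ProjTensorSquare.nacg ProjTensorSquare.nsp ProjTensorSquare.cplt

namespace ProjTensorSquare

variable {A : Type u} [NonUnitalNormedRing A] [NormedSpace ℂ A]
    [IsScalarTower ℂ A A] [SMulCommClass ℂ A A] [CompleteSpace A]

/-- `t` is an approximate diagonal for `A` consisting of symmetric tensors, along the
filter `l`:  each `t i` is symmetric, `a • tᵢ - tᵢ • a → 0` and `π(tᵢ) a → a` for all `a`. -/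
def IsSymmApproxDiagonal (P : ProjTensorSquare A) {ι : Type u} (l : Filter ι)
    (t : ι → P.T) : Prop :=
  (∀ i, P.flip (t i) = t i) ∧
  (∀ a : A, Tendsto (fun i => P.lmul a (t i) - P.rmul a (t i)) l (𝓝 0)) ∧
  (∀ a : A, Tendsto (fun i => P.π (t i) * a) l (𝓝 a))

/-- A Banach algebra is symmetrically pseudo-amenable if it has a (not necessarily bounded)
approximate diagonal consisting of symmetric tensors. -/
def SymmPseudoAmenable (P : ProjTensorSquare A) : Prop :=
  ∃ (ι : Type u) (l : Filter ι) (t : ι → P.T), l.NeBot ∧ P.IsSymmApproxDiagonal l t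

end ProjTensorSquare

/-- A Banach `A`-bimodule: a Banach space with commuting bounded left and right `A`-actions. -/
structure BanachBimodule (A X : Type u) [NonUnitalNormedRing A] [NormedSpace ℂ A]
    [NormedAddCommGroup X] [NormedSpace ℂ X] where
  /-- the left action `(a, x) ↦ a • x` -/
  lsmul : A →L[ℂ] X →L[ℂ] X
  /-- the right action `(a, x) ↦ x • a` -/
  rsmul : A →L[ℂ] X →L[ℂ] X
  lsmul_mul : ∀ a b x, lsmul (a * b) x = lsmul a (lsmul b x)
  rsmul_mul : ∀ a b x, rsmul (a * b) x = rsmul b (rsmul a x)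
  lsmul_rsmul : ∀ a b x, lsmul a (rsmul b x) = rsmul b (lsmul a x)

namespace BanachBimodule

variable {A X : Type u} [NonUnitalNormedRing A] [NormedSpace ℂ A]
  [NormedAddCommGroup X] [NormedSpace ℂ X]

/-- `D(ab) = D(a)·b + a·D(b)` -/
def IsDerivation (M : BanachBimodule A X) (D : A → X) : Prop :=
  ∀ a b, D (a * b) = M.rsmul b (D a) + M.lsmul a (D b)

/-- `D(ab + ba) = D(a)·b + a·D(b) + D(b)·a + b·D(a)` -/
def IsJordanDerivation (M : BanachBimodule A X) (D : A → X) : Prop :=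
  ∀ a b, D (a * b + b * a) =
    M.rsmul b (D a) + M.lsmul a (D b) + M.rsmul a (D b) + M.lsmul b (D a)

/-- `D(ab − ba) = D(a)·b + a·D(b) − D(b)·a − b·D(a)` -/
def IsLieDerivation (M : BanachBimodule A X) (D : A → X) : Prop :=
  ∀ a b, D (a * b - b * a) =
    M.rsmul b (D a) + M.lsmul a (D b) - M.rsmul a (D b) - M.lsmul b (D a)

/-- the center `Z_𝔘(X) = {x ∈ X | a·x = x·a for all a ∈ 𝔘}` -/
def center (M : BanachBimodule A X) : Set X := {x | ∀ a, M.lsmul a x = M.rsmul a x}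

/-- the left action extended to the `ℓ¹`-unitization `𝔘♯`, via `1 • x = x` -/
noncomputable def uLsmul (M : BanachBimodule A X) (a : WithLp 1 (Unitization ℂ A)) (x : X) : X :=
  (WithLp.equiv 1 (Unitization ℂ A) a).fst • x + M.lsmul ((WithLp.equiv 1 (Unitization ℂ A)) a).snd x

/-- the right action extended to the `ℓ¹`-unitization `𝔘♯`, via `x • 1 = x` -/
noncomputable def uRsmul (M : BanachBimodule A X) (a : WithLp 1 (Unitization ℂ A)) (x : X) : X :=
  (WithLp.equiv 1 (Unitization ℂ A) a).fst • x + M.rsmul ((WithLp.equiv 1 (Unitization ℂ A)) a).snd x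

end BanachBimodule

lemma eq_of_add_self_eq_add_self {X : Type*} [AddCommGroup X] [Module ℂ X] {x y : X}
    (h : x + x = y + y) : x = y := by
  have := IsAddTorsionFree.of_isTorsionFree ℂ X
  exact nsmul_right_injective two_ne_zero (by simpa only [two_nsmul] using h)

namespace BanachBimodule

section Jordan

variable {B X : Type u} [NonUnitalNormedRing B] [NormedSpace ℂ B]
  [NormedAddCommGroup X] [NormedSpace ℂ X] (N : BanachBimodule B X) (D : B →L[ℂ] X)

noncomputable def defect (a b : B) : X := D (a * b) - N.rsmul b (D a) - N.lsmul a (D b)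

lemma defect_mul_sub_defect_mul (a b c : B) :
    N.defect D (a * b) c - N.defect D a (b * c) =
      N.lsmul a (N.defect D b c) - N.rsmul c (N.defect D a b) := by
  simp only [defect, map_sub, N.lsmul_mul, N.rsmul_mul, N.lsmul_rsmul, mul_assoc]
  abel

variable {N D}

namespace IsJordanDerivation

lemma defect_swap (hD : N.IsJordanDerivation D) (a b : B) :
    N.defect D b a = -N.defect D a b := by
  have h := hD a b
  rw [map_add] at h
  simp only [defect]
  linear_combination (norm := abel) h

lemma map_mul_self (hD : N.IsJordanDerivation D) (a : B) :
    D (a * a) = N.rsmul a (D a) + N.lsmul a (D a) := by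
  apply eq_of_add_self_eq_add_self
  rw [← map_add, hD]
  abel

lemma map_mul_mul_self (hD : N.IsJordanDerivation D) (a b : B) :
    D (a * b * a) =
      N.lsmul (a * b) (D a) + N.lsmul a (N.rsmul a (D b)) + N.rsmul (b * a) (D a) := by
  apply eq_of_add_self_eq_add_self
  have h := hD a (a * b + b * a)
  rw [show a * (a * b + b * a) + (a * b + b * a) * a =
      (a * a * b + b * (a * a)) + (a * b * a + a * b * a) by noncomm_ring,
    map_add D (a * a * b + b * (a * a)), map_add D (a * b * a), hD (a * a) b, hD a b,
    map_mul_self hD] at h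
  linear_combination (norm := skip) h
  simp only [map_add, add_apply, N.lsmul_mul, N.rsmul_mul, N.lsmul_rsmul]
  abel

lemma map_mul_mul_add_mul_mul (hD : N.IsJordanDerivation D) (x y z : B) :
    D (x * y * z + z * y * x) =
      N.lsmul (x * y) (D z) + N.lsmul (z * y) (D x) + N.lsmul x (N.rsmul z (D y)) +
        N.lsmul z (N.rsmul x (D y)) + N.rsmul (y * z) (D x) + N.rsmul (y * x) (D z) := by
  have h := map_mul_mul_self hD (x + z) y
  rw [show (x + z) * y * (x + z) = x * y * x + (x * y * z + z * y * x) + z * y * z by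
      noncomm_ring, map_add, map_add, map_mul_mul_self hD, map_mul_mul_self hD] at h
  linear_combination (norm := skip) h
  simp only [add_mul, mul_add, map_add, add_apply]
  abel

lemma defect_mul_add_defect_mul (hD : N.IsJordanDerivation D) (x y c : B) :
    N.defect D (x * y) c + N.defect D c (y * x) =
      N.lsmul c (N.defect D x y) - N.rsmul c (N.defect D x y) := by
  have h := hD x y
  have h' := map_mul_mul_add_mul_mul hD x y c
  rw [map_add] at h h'
  simp only [defect]
  linear_combination (norm := skip) h' - congrArg (N.lsmul c) h
  simp only [map_add, map_sub, N.lsmul_mul, N.rsmul_mul, N.lsmul_rsmul, mul_assoc]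
  abel

end IsJordanDerivation

end Jordan

section Commutator

variable {B X : Type u} [NonUnitalNormedRing B] [NormedSpace ℂ B]
  [NormedAddCommGroup X] [NormedSpace ℂ X] (N : BanachBimodule B X)

noncomputable def ad (a : B) : X →L[ℂ] X := N.lsmul a - N.rsmul a

lemma ad_apply (a : B) (x : X) : N.ad a x = N.lsmul a x - N.rsmul a x := rfl

lemma ad_mul (a b : B) (x : X) :
    N.ad (a * b) x = N.lsmul a (N.ad b x) + N.rsmul b (N.ad a x) := by
  simp only [ad_apply, map_sub, N.lsmul_mul, N.rsmul_mul, N.lsmul_rsmul]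
  abel

lemma ad_mul_sub_mul (a b : B) (x : X) :
    N.ad (a * b - b * a) x = N.ad a (N.ad b x) - N.ad b (N.ad a x) := by
  simp only [ad_apply, map_sub, sub_apply, N.lsmul_mul, N.rsmul_mul, N.lsmul_rsmul]
  abel

end Commutator

section Unital

variable {B X : Type u} [NormedRing B] [NormedSpace ℂ B]
  [NormedAddCommGroup X] [NormedSpace ℂ X] {N : BanachBimodule B X} {D : B →L[ℂ] X}

variable (N) in
def IsUnital : Prop := (∀ x, N.lsmul 1 x = x) ∧ ∀ x, N.rsmul 1 x = x

lemma IsJordanDerivation.map_one (hN : N.IsUnital) (hD : N.IsJordanDerivation D) : D 1 = 0 := by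
  have h := hD 1 1
  simp only [mul_one, map_add, hN.1, hN.2] at h
  exact eq_of_add_self_eq_add_self (by simpa using h)

lemma IsJordanDerivation.defect_one_left (hN : N.IsUnital) (hD : N.IsJordanDerivation D)
    (a : B) : N.defect D 1 a = 0 := by
  simp [defect, hD.map_one hN, hN.1]

end Unital

end BanachBimodule

namespace ProjTensorSquare

variable {B : Type u} [NonUnitalNormedRing B] [NormedSpace ℂ B] [IsScalarTower ℂ B B]
  [SMulCommClass ℂ B B] [CompleteSpace B] (P : ProjTensorSquare B)

theorem ext_tmul {Y : Type*} [NormedAddCommGroup Y] [NormedSpace ℂ Y] {f g : P.T →L[ℂ] Y}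
    (h : ∀ a b, f (P.tmul a b) = g (P.tmul a b)) : f = g := by
  ext s
  obtain ⟨u, v, -, hs, -⟩ := P.exists_rep s 1 one_pos
  exact (hs.mapL f).unique (by simpa only [h] using hs.mapL g)

noncomputable def liftL {X : Type u} [NormedAddCommGroup X] [NormedSpace ℂ X] [CompleteSpace X]
    (f : B →L[ℂ] B →L[ℂ] X) : P.T →L[ℂ] X :=
  (P.lift f).choose

@[simp]
lemma liftL_tmul {X : Type u} [NormedAddCommGroup X] [NormedSpace ℂ X] [CompleteSpace X]
    (f : B →L[ℂ] B →L[ℂ] X) (a b : B) : P.liftL f (P.tmul a b) = f a b :=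
  (P.lift f).choose_spec.1 a b

lemma flip_lmul (a : B) (s : P.T) : P.flip (P.lmul a s) = P.lcirc a (P.flip s) := by
  refine DFunLike.congr_fun (P.ext_tmul (f := P.flip.comp (P.lmul a))
    (g := (P.lcirc a).comp P.flip) fun p q => ?_) s
  simp [P.lmul_tmul, P.flip_tmul, P.lcirc_tmul]

lemma flip_rmul (a : B) (s : P.T) : P.flip (P.rmul a s) = P.rcirc a (P.flip s) := by
  refine DFunLike.congr_fun (P.ext_tmul (f := P.flip.comp (P.rmul a))
    (g := (P.rcirc a).comp P.flip) fun p q => ?_) s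
  simp [P.rmul_tmul, P.flip_tmul, P.rcirc_tmul]

end ProjTensorSquare

namespace BanachBimodule

section Lifts

variable {B X : Type u} [NonUnitalNormedRing B] [NormedSpace ℂ B] [IsScalarTower ℂ B B]
  [SMulCommClass ℂ B B] [NormedAddCommGroup X] [NormedSpace ℂ X] (N : BanachBimodule B X)

noncomputable def defectL (D : B →L[ℂ] X) : B →L[ℂ] B →L[ℂ] X :=
  (ContinuousLinearMap.compL ℂ B B X D).comp (ContinuousLinearMap.mul ℂ B) -
    N.rsmul.flip.comp D - (N.lsmul.flip.comp D).flip

@[simp]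
lemma defectL_apply (D : B →L[ℂ] X) (a b : B) : N.defectL D a b = N.defect D a b := rfl

variable [CompleteSpace B] [CompleteSpace X] (P : ProjTensorSquare B) (D : B →L[ℂ] X)

noncomputable def phi : P.T →L[ℂ] X := P.liftL (N.lsmul.flip.comp D).flip

noncomputable def phiRight : P.T →L[ℂ] X := P.liftL (N.rsmul.flip.comp D)

noncomputable def defectLift : P.T →L[ℂ] X := P.liftL (N.defectL D)

noncomputable def psi (x : X) : P.T →L[ℂ] X := P.liftL (N.lsmul.flip.comp (N.rsmul.flip x)).flip

@[simp] lemma phi_tmul (a b : B) : N.phi P D (P.tmul a b) = N.lsmul a (D b) := by simp [phi]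

@[simp] lemma phiRight_tmul (a b : B) : N.phiRight P D (P.tmul a b) = N.rsmul b (D a) := by
  simp [phiRight]

@[simp] lemma defectLift_tmul (a b : B) : N.defectLift P D (P.tmul a b) = N.defect D a b := by
  simp [defectLift]

@[simp] lemma psi_tmul (x : X) (a b : B) : N.psi P x (P.tmul a b) = N.lsmul a (N.rsmul b x) := by
  simp [psi]

variable {N P D}

lemma phi_lmul (a : B) (s : P.T) : N.phi P D (P.lmul a s) = N.lsmul a (N.phi P D s) :=
  DFunLike.congr_fun (P.ext_tmul (f := (N.phi P D).comp (P.lmul a))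
    (g := (N.lsmul a).comp (N.phi P D)) fun p q => by simp [P.lmul_tmul, N.lsmul_mul]) s

lemma phiRight_rmul (a : B) (s : P.T) :
    N.phiRight P D (P.rmul a s) = N.rsmul a (N.phiRight P D s) :=
  DFunLike.congr_fun (P.ext_tmul (f := (N.phiRight P D).comp (P.rmul a))
    (g := (N.rsmul a).comp (N.phiRight P D)) fun p q => by simp [P.rmul_tmul, N.rsmul_mul]) s

lemma psi_lmul_sub_psi_rmul (x : X) (a : B) (s : P.T) :
    N.psi P x (P.lmul a s) - N.psi P x (P.rmul a s) = N.ad a (N.psi P x s) :=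
  DFunLike.congr_fun (P.ext_tmul (f := (N.psi P x).comp (P.lmul a) - (N.psi P x).comp (P.rmul a))
    (g := (N.ad a).comp (N.psi P x)) fun p q => by
      simp [P.lmul_tmul, P.rmul_tmul, ad_apply, N.lsmul_mul, N.rsmul_mul, N.lsmul_rsmul]) s

lemma phi_add_phiRight (s : P.T) :
    N.phi P D s + N.phiRight P D s = D (P.π s) - N.defectLift P D s :=
  DFunLike.congr_fun (P.ext_tmul (f := N.phi P D + N.phiRight P D)
    (g := D.comp P.π - N.defectLift P D) fun p q => by
      simp only [add_apply, sub_apply, ContinuousLinearMap.comp_apply, P.π_tmul, phi_tmul,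
        phiRight_tmul, defectLift_tmul, defect]
      abel) s

lemma defectLift_rmul (a : B) (s : P.T) :
    N.defectLift P D (P.rmul a s) = N.defect D (P.π s) a - N.phi P D (P.rmul a s) +
      N.rsmul a (N.phi P D s) + N.lsmul (P.π s) (D a) + N.rsmul a (N.defectLift P D s) :=
  DFunLike.congr_fun (P.ext_tmul (f := (N.defectLift P D).comp (P.rmul a))
    (g := ((N.defectL D).flip a).comp P.π - (N.phi P D).comp (P.rmul a) +
      (N.rsmul a).comp (N.phi P D) + (N.lsmul.flip (D a)).comp P.π +
      (N.rsmul a).comp (N.defectLift P D)) fun p q => by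
    have h := N.defect_mul_sub_defect_mul D p q a
    simp only [ContinuousLinearMap.comp_apply, add_apply, sub_apply,
      ContinuousLinearMap.flip_apply, P.rmul_tmul,
      P.π_tmul, defectLift_tmul, defectL_apply, phi_tmul]
    linear_combination (norm := skip) -h
    simp only [defect, map_sub, N.lsmul_mul, N.lsmul_rsmul]
    abel) s

namespace IsJordanDerivation

lemma defectLift_flip (hD : N.IsJordanDerivation D) (s : P.T) :
    N.defectLift P D (P.flip s) = -N.defectLift P D s :=
  DFunLike.congr_fun (P.ext_tmul (f := (N.defectLift P D).comp P.flip)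
    (g := -N.defectLift P D) fun p q => by
      simpa only [ContinuousLinearMap.comp_apply, neg_apply, P.flip_tmul, defectLift_tmul]
        using hD.defect_swap p q) s

/-- On `p ⊗ q` this is the three-variable Jordan identity
`δ(aq, p) + δ(p, qa) = p·δ(a, q) − δ(a, q)·p`. -/
lemma psi_apply (hD : N.IsJordanDerivation D) (a : B) (s : P.T) :
    N.psi P (D a) s = N.phi P D (P.lcirc a s) - N.phi P D (P.rcirc a s) -
      N.phiRight P D (P.lmul a (P.flip s)) + N.rsmul (P.π (P.flip s)) (D a) +
      N.lsmul a (N.phiRight P D (P.flip s)) - N.defectLift P D (P.lmul a (P.flip s)) -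
      N.defectLift P D (P.rmul a s) :=
  DFunLike.congr_fun (P.ext_tmul (f := N.psi P (D a))
    (g := (N.phi P D).comp (P.lcirc a) - (N.phi P D).comp (P.rcirc a) -
      (N.phiRight P D).comp ((P.lmul a).comp P.flip) + (N.rsmul.flip (D a)).comp (P.π.comp P.flip) +
      (N.lsmul a).comp ((N.phiRight P D).comp P.flip) -
      (N.defectLift P D).comp ((P.lmul a).comp P.flip) - (N.defectLift P D).comp (P.rmul a))
    fun p q => by
    have h := hD.defect_mul_add_defect_mul a q p
    simp only [ContinuousLinearMap.comp_apply, add_apply, sub_apply,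
      ContinuousLinearMap.flip_apply, P.rmul_tmul,
      P.lmul_tmul, P.lcirc_tmul, P.rcirc_tmul, P.flip_tmul, P.π_tmul, defectLift_tmul,
      phi_tmul, phiRight_tmul, psi_tmul]
    linear_combination (norm := skip) h
    simp only [defect, map_sub, N.lsmul_mul, N.rsmul_mul, N.lsmul_rsmul, mul_assoc]
    abel) s

end IsJordanDerivation

/-- On `p ⊗ q` the two sides are `p·δ(q, a)` and `δ(q, a)·p`. -/
lemma phi_rmul_sub_eq_of_defect_mem_center (hc : ∀ a b, N.defect D a b ∈ N.center) (a : B)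
    (s : P.T) :
    N.phi P D (P.rmul a s) - N.rsmul a (N.phi P D s) - N.lsmul (P.π s) (D a) =
      N.phiRight P D (P.rcirc a (P.flip s)) - N.phiRight P D (P.lcirc a (P.flip s)) -
        N.psi P (D a) (P.flip s) :=
  DFunLike.congr_fun (P.ext_tmul
    (f := (N.phi P D).comp (P.rmul a) - (N.rsmul a).comp (N.phi P D) -
      (N.lsmul.flip (D a)).comp P.π)
    (g := ((N.phiRight P D).comp (P.rcirc a) - (N.phiRight P D).comp (P.lcirc a) -
      N.psi P (D a)).comp P.flip)
    fun p q => by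
    have h := hc q a p
    simp only [ContinuousLinearMap.comp_apply, sub_apply,
      ContinuousLinearMap.flip_apply, P.rmul_tmul,
      P.lcirc_tmul, P.rcirc_tmul, P.flip_tmul, P.π_tmul, phi_tmul, phiRight_tmul, psi_tmul]
    linear_combination (norm := skip) h
    simp only [defect, map_sub, N.lsmul_mul, N.rsmul_mul, N.lsmul_rsmul]
    abel) s

end Lifts

end BanachBimodule

namespace ProjTensorSquare.IsSymmApproxDiagonal

section

variable {B : Type u} [NonUnitalNormedRing B] [NormedSpace ℂ B] [IsScalarTower ℂ B B]
  [SMulCommClass ℂ B B] [CompleteSpace B] {P : ProjTensorSquare B} {ι : Type u} {l : Filter ι}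
  {t : ι → P.T} {Y : Type*} [NormedAddCommGroup Y] [NormedSpace ℂ Y]

lemma flip_apply (ht : P.IsSymmApproxDiagonal l t) (i : ι) : P.flip (t i) = t i := ht.1 i

lemma tendsto_map_lmul_sub_map_rmul (ht : P.IsSymmApproxDiagonal l t) (f : P.T →L[ℂ] Y)
    (a : B) : Tendsto (fun i => f (P.lmul a (t i)) - f (P.rmul a (t i))) l (𝓝 0) := by
  simpa [Function.comp_def] using (f.continuous.tendsto 0).comp (ht.2.1 a)

lemma tendsto_map_lcirc_sub_map_rcirc (ht : P.IsSymmApproxDiagonal l t) (f : P.T →L[ℂ] Y)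
    (a : B) : Tendsto (fun i => f (P.lcirc a (t i)) - f (P.rcirc a (t i))) l (𝓝 0) := by
  simpa [P.flip_lmul, P.flip_rmul, ht.flip_apply] using
    ht.tendsto_map_lmul_sub_map_rmul (f.comp P.flip) a

end

variable {B : Type u} [NormedRing B] [NormedSpace ℂ B] [IsScalarTower ℂ B B]
  [SMulCommClass ℂ B B] [CompleteSpace B] {P : ProjTensorSquare B} {ι : Type u} {l : Filter ι}
  {t : ι → P.T} {Y : Type*} [NormedAddCommGroup Y] [NormedSpace ℂ Y]

lemma tendsto_map_π (ht : P.IsSymmApproxDiagonal l t) (f : B →L[ℂ] Y) :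
    Tendsto (fun i => f (P.π (t i))) l (𝓝 (f 1)) :=
  (f.continuous.tendsto 1).comp (by simpa using ht.2.2 1)

end ProjTensorSquare.IsSymmApproxDiagonal

namespace BanachBimodule

variable {B X : Type u} [NormedRing B] [NormedSpace ℂ B] [IsScalarTower ℂ B B]
  [SMulCommClass ℂ B B] [CompleteSpace B] [NormedAddCommGroup X] [NormedSpace ℂ X]
  [CompleteSpace X] {N : BanachBimodule B X} {P : ProjTensorSquare B} {D : B →L[ℂ] X}
  {ι : Type u} {l : Filter ι} {t : ι → P.T}

lemma tendsto_ad_psi (ht : P.IsSymmApproxDiagonal l t) (x : X) (c : B) :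
    Tendsto (fun i => N.ad c (N.psi P x (t i))) l (𝓝 0) := by
  simpa only [psi_lmul_sub_psi_rmul] using ht.tendsto_map_lmul_sub_map_rmul (N.psi P x) c

namespace IsJordanDerivation

lemma defectLift_eq_zero (hD : N.IsJordanDerivation D) (ht : P.IsSymmApproxDiagonal l t)
    (i : ι) : N.defectLift P D (t i) = 0 := by
  have h := hD.defectLift_flip (t i)
  rw [ht.flip_apply] at h
  exact eq_of_add_self_eq_add_self (by nth_rewrite 1 [h]; simp)

lemma tendsto_phi_add_phiRight (hN : N.IsUnital) (hD : N.IsJordanDerivation D)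
    (ht : P.IsSymmApproxDiagonal l t) :
    Tendsto (fun i => N.phi P D (t i) + N.phiRight P D (t i)) l (𝓝 0) := by
  simp_rw [phi_add_phiRight, hD.defectLift_eq_zero ht, sub_zero]
  simpa [hD.map_one hN] using ht.tendsto_map_π D

lemma tendsto_defectLift_rmul_add_ad_phi (hN : N.IsUnital) (hD : N.IsJordanDerivation D)
    (ht : P.IsSymmApproxDiagonal l t) (a : B) :
    Tendsto (fun i => N.defectLift P D (P.rmul a (t i)) + N.ad a (N.phi P D (t i))) l
      (𝓝 (D a)) := by
  have h := ((ht.tendsto_map_π ((N.defectL D).flip a)).add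
    (ht.tendsto_map_lmul_sub_map_rmul (N.phi P D) a)).add
    (ht.tendsto_map_π (N.lsmul.flip (D a)))
  simp only [ContinuousLinearMap.flip_apply, defectL_apply, hD.defect_one_left hN, hN.1,
    zero_add] at h
  refine h.congr fun i => ?_
  rw [defectLift_rmul, hD.defectLift_eq_zero ht, phi_lmul, ad_apply, map_zero]
  abel

lemma tendsto_psi_sub_ad_phi (hN : N.IsUnital) (hD : N.IsJordanDerivation D)
    (ht : P.IsSymmApproxDiagonal l t) (a : B) :
    Tendsto (fun i => N.psi P (D a) (t i) - N.ad a (N.phi P D (t i))) l (𝓝 (-D a)) := by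
  have hxy := ((N.ad a).continuous.tendsto 0).comp (hD.tendsto_phi_add_phiRight hN ht)
  rw [map_zero] at hxy
  have h := (((((ht.tendsto_map_lcirc_sub_map_rcirc (N.phi P D) a).sub
    (ht.tendsto_map_lmul_sub_map_rmul (N.phiRight P D) a)).add
    (ht.tendsto_map_π (N.rsmul.flip (D a)))).add hxy).sub
    (ht.tendsto_map_lmul_sub_map_rmul (N.defectLift P D) a)).sub
    ((hD.tendsto_defectLift_rmul_add_ad_phi hN ht a).const_smul (2 : ℂ))
  convert h using 1
  · funext i
    simp only [Function.comp_apply, hD.psi_apply, ht.flip_apply, phiRight_rmul,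
      ContinuousLinearMap.flip_apply, ad_apply, map_add]
    module
  · simp only [ContinuousLinearMap.flip_apply, hN.2]
    congr 1
    module

lemma tendsto_ad_ad_phi (hN : N.IsUnital) (hD : N.IsJordanDerivation D)
    (ht : P.IsSymmApproxDiagonal l t) (p q : B) :
    Tendsto (fun i => N.ad p (N.ad q (N.phi P D (t i)))) l (𝓝 (N.ad p (D q))) := by
  have h := (tendsto_ad_psi (N := N) ht (D q) p).sub
    (((N.ad p).continuous.tendsto _).comp (hD.tendsto_psi_sub_ad_phi hN ht q))
  simpa only [Function.comp_def, map_sub, map_neg, sub_sub_cancel, zero_sub, neg_neg] using h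

lemma defect_mem_center [l.NeBot] (hN : N.IsUnital) (hD : N.IsJordanDerivation D)
    (ht : P.IsSymmApproxDiagonal l t) (a b : B) : N.defect D a b ∈ N.center := by
  intro c
  have hψ : Tendsto (fun i => N.psi P (D (a * b - b * a)) (t i)) l
      (𝓝 (-(N.defect D a b + N.defect D a b))) := by
    have h := (hD.tendsto_psi_sub_ad_phi hN ht (a * b - b * a)).add
      ((hD.tendsto_ad_ad_phi hN ht a b).sub (hD.tendsto_ad_ad_phi hN ht b a))
    convert h using 1
    · funext i
      rw [ad_mul_sub_mul]
      abel
    · congr 1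
      nth_rewrite 2 [← neg_neg (N.defect D a b)]
      rw [← hD.defect_swap]
      simp only [defect, ad_apply, map_sub]
      abel
  have h := tendsto_nhds_unique (((N.ad c).continuous.tendsto _).comp hψ) (tendsto_ad_psi ht _ c)
  rw [map_neg, neg_eq_zero, map_add] at h
  exact sub_eq_zero.mp (eq_of_add_self_eq_add_self (h.trans (add_zero 0).symm))

lemma tendsto_ad_phi [l.NeBot] (hN : N.IsUnital) (hD : N.IsJordanDerivation D)
    (ht : P.IsSymmApproxDiagonal l t) (a : B) :
    Tendsto (fun i => N.ad a (N.phi P D (t i))) l (𝓝 (D a)) := by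
  -- `θ` is `p ⊗ q ↦ p·δ(q, a)` evaluated at `t`; centrality of `δ` computes it a second way.
  set θ := fun i => N.phi P D (P.rmul a (t i)) - N.rsmul a (N.phi P D (t i)) -
    N.lsmul (P.π (t i)) (D a)
  have hθ_sub : Tendsto (fun i => θ i - N.ad a (N.phi P D (t i))) l (𝓝 (-D a)) := by
    have h := (ht.tendsto_map_lmul_sub_map_rmul (N.phi P D) a).neg.sub
      (ht.tendsto_map_π (N.lsmul.flip (D a)))
    convert h using 1
    · funext i
      simp only [θ, phi_lmul, ad_apply, ContinuousLinearMap.flip_apply]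
      abel
    · simp [hN.1]
  have hθ_add : Tendsto (fun i => θ i + N.ad a (N.phi P D (t i))) l (𝓝 (D a)) := by
    have h := (ht.tendsto_map_lcirc_sub_map_rcirc (N.phiRight P D) a).neg.sub
      (hD.tendsto_psi_sub_ad_phi hN ht a)
    convert h using 1
    · funext i
      simp only [θ, phi_rmul_sub_eq_of_defect_mem_center (hD.defect_mem_center hN ht),
        ht.flip_apply]
      abel
    · simp
  convert (hθ_add.sub hθ_sub).const_smul (2⁻¹ : ℂ) using 1
  · funext i
    module
  · congr 1
    module

theorem isDerivation_of_isSymmApproxDiagonal [l.NeBot] (hN : N.IsUnital)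
    (hD : N.IsJordanDerivation D) (ht : P.IsSymmApproxDiagonal l t) : N.IsDerivation D := by
  intro a b
  have h := (((N.rsmul b).continuous.tendsto _).comp (hD.tendsto_ad_phi hN ht a)).add
    (((N.lsmul a).continuous.tendsto _).comp (hD.tendsto_ad_phi hN ht b))
  exact tendsto_nhds_unique (hD.tendsto_ad_phi hN ht (a * b))
    (h.congr fun i => by simp only [Function.comp_apply, ad_mul, add_comm])

end IsJordanDerivation

end BanachBimodule

section Unitization

variable {A X : Type u} [NonUnitalNormedRing A] [NormedSpace ℂ A] [IsScalarTower ℂ A A]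
  [SMulCommClass ℂ A A] [NormedAddCommGroup X] [NormedSpace ℂ X]

namespace WithLp

noncomputable def unitizationFst : WithLp 1 (Unitization ℂ A) →L[ℂ] ℂ :=
  LinearMap.mkContinuous
    { toFun := fun x => (WithLp.equiv 1 (Unitization ℂ A) x).fst
      map_add' := fun x y => by simp
      map_smul' := fun c x => by simp } 1
    fun x => by simp [WithLp.unitization_norm_def]

noncomputable def unitizationSnd : WithLp 1 (Unitization ℂ A) →L[ℂ] A :=
  LinearMap.mkContinuous
    { toFun := fun x => (WithLp.equiv 1 (Unitization ℂ A) x).snd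
      map_add' := fun x y => by simp
      map_smul' := fun c x => by simp } 1
    fun x => by simp [WithLp.unitization_norm_def]

@[simp]
lemma unitizationFst_apply (x : WithLp 1 (Unitization ℂ A)) :
    unitizationFst x = (WithLp.equiv 1 (Unitization ℂ A) x).fst := rfl

@[simp]
lemma unitizationSnd_apply (x : WithLp 1 (Unitization ℂ A)) :
    unitizationSnd x = (WithLp.equiv 1 (Unitization ℂ A) x).snd := rfl

@[simp] lemma unitizationFst_one : unitizationFst (1 : WithLp 1 (Unitization ℂ A)) = 1 := rfl

@[simp] lemma unitizationSnd_one : unitizationSnd (1 : WithLp 1 (Unitization ℂ A)) = 0 := rfl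

lemma unitizationFst_mul (x y : WithLp 1 (Unitization ℂ A)) :
    unitizationFst (x * y) = unitizationFst x * unitizationFst y := by
  simp

lemma unitizationSnd_mul (x y : WithLp 1 (Unitization ℂ A)) :
    unitizationSnd (x * y) = unitizationFst x • unitizationSnd y +
      unitizationFst y • unitizationSnd x + unitizationSnd x * unitizationSnd y := by
  simp

end WithLp

open WithLp

namespace BanachBimodule

noncomputable def unitization (M : BanachBimodule A X) :
    BanachBimodule (WithLp 1 (Unitization ℂ A)) X where
  lsmul := (ContinuousLinearMap.lsmul ℂ ℂ).comp unitizationFst + M.lsmul.comp unitizationSnd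
  rsmul := (ContinuousLinearMap.lsmul ℂ ℂ).comp unitizationFst + M.rsmul.comp unitizationSnd
  lsmul_mul a b x := by
    simp only [add_apply, ContinuousLinearMap.comp_apply, ContinuousLinearMap.lsmul_apply,
      unitizationFst_mul, unitizationSnd_mul, map_add, map_smul, smul_apply, M.lsmul_mul]
    module
  rsmul_mul a b x := by
    simp only [add_apply, ContinuousLinearMap.comp_apply, ContinuousLinearMap.lsmul_apply,
      unitizationFst_mul, unitizationSnd_mul, map_add, map_smul, smul_apply, M.rsmul_mul]
    module
  lsmul_rsmul a b x := by
    simp only [add_apply, ContinuousLinearMap.comp_apply, ContinuousLinearMap.lsmul_apply,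
      map_add, map_smul, smul_add, M.lsmul_rsmul]
    module

variable {M : BanachBimodule A X} {D : A →L[ℂ] X}

lemma unitization_lsmul_apply (a : WithLp 1 (Unitization ℂ A)) (x : X) :
    M.unitization.lsmul a x = unitizationFst a • x + M.lsmul (unitizationSnd a) x := rfl

lemma unitization_rsmul_apply (a : WithLp 1 (Unitization ℂ A)) (x : X) :
    M.unitization.rsmul a x = unitizationFst a • x + M.rsmul (unitizationSnd a) x := rfl

lemma unitization_isUnital : M.unitization.IsUnital :=
  ⟨fun x => by simp only [unitization_lsmul_apply, unitizationFst_one, unitizationSnd_one,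
    one_smul, map_zero, zero_apply, add_zero], fun x => by simp only [unitization_rsmul_apply,
    unitizationFst_one, unitizationSnd_one, one_smul, map_zero, zero_apply, add_zero]⟩

lemma IsJordanDerivation.unitization (hD : M.IsJordanDerivation D) :
    M.unitization.IsJordanDerivation (D.comp unitizationSnd) := by
  intro a b
  have h := hD (unitizationSnd a) (unitizationSnd b)
  simp only [ContinuousLinearMap.comp_apply, unitization_lsmul_apply, unitization_rsmul_apply]
  linear_combination (norm := skip) h
  simp only [map_add, unitizationSnd_mul, map_smul]
  module

lemma IsDerivation.of_unitization (hD : M.unitization.IsDerivation (D.comp unitizationSnd)) :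
    M.IsDerivation D := by
  intro a b
  simpa [unitization_lsmul_apply, unitization_rsmul_apply] using
    hD (WithLp.toLp 1 (a : Unitization ℂ A)) (WithLp.toLp 1 (b : Unitization ℂ A))

end BanachBimodule

end Unitization

theorem jordanDerivation_isDerivation_general {A X : Type u} [NonUnitalNormedRing A] [NormedSpace ℂ A]
    [IsScalarTower ℂ A A] [SMulCommClass ℂ A A] [CompleteSpace A]
    [NormedAddCommGroup X] [NormedSpace ℂ X] [CompleteSpace X]
    (P : ProjTensorSquare (WithLp 1 (Unitization ℂ A))) (M : BanachBimodule A X)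
    {ι : Type u} (l : Filter ι) [l.NeBot] (t : ι → P.T)
    (ht : P.IsSymmApproxDiagonal l t) :
    ∀ D : A →L[ℂ] X, M.IsJordanDerivation D → M.IsDerivation D := by
  intro D hD
  exact (hD.unitization.isDerivation_of_isSymmApproxDiagonal
    BanachBimodule.unitization_isUnital ht).of_unitization

/-- Let `𝔘` be a Banach algebra whose unitization `𝔘♯` (with the `ℓ¹`-norm)
is symmetrically pseudo-amenable with a symmetric approximate diagonal `{t_λ}`, and let `X` be
a Banach `𝔘`-bimodule such that for each `x ∈ X` the net `{ψ_x(t_λ)}` is bounded and for each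
bounded Jordan derivation `D : 𝔘 → X` the net `{Φ_D(t_λ)}` is bounded (where
`ψ_x(a ⊗ b) = a x b` and `Φ_D(a ⊗ b) = a D(b)` on `𝔘♯ ⊗̂ 𝔘♯`, with `D(1) = 0`).
Then every bounded Jordan derivation from `𝔘` to `X` is a derivation. -/
theorem jordanDerivation_isDerivation {A X : Type u} [NonUnitalNormedRing A] [NormedSpace ℂ A]
    [IsScalarTower ℂ A A] [SMulCommClass ℂ A A] [CompleteSpace A]
    [NormedAddCommGroup X] [NormedSpace ℂ X] [CompleteSpace X]
    (P : ProjTensorSquare (WithLp 1 (Unitization ℂ A))) (M : BanachBimodule A X)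
    {ι : Type u} (l : Filter ι) [l.NeBot] (t : ι → P.T)
    (ht : P.IsSymmApproxDiagonal l t)
    (hψ : ∀ x : X, ∀ g : P.T →L[ℂ] X,
      (∀ a b, g (P.tmul a b) = M.uLsmul a (M.uRsmul b x)) → ∃ C, ∀ i, ‖g (t i)‖ ≤ C)
    (hΦ : ∀ D : A →L[ℂ] X, M.IsJordanDerivation D → ∀ g : P.T →L[ℂ] X,
      (∀ a b, g (P.tmul a b) =
        M.uLsmul a (D ((WithLp.equiv 1 (Unitization ℂ A)) b).snd)) →
      ∃ C, ∀ i, ‖g (t i)‖ ≤ C) :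
    ∀ D : A →L[ℂ] X, M.IsJordanDerivation D → M.IsDerivation D :=
  jordanDerivation_isDerivation_general P M l t ht
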